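/- Let X be a C-contracting quasi-geodesic in Y and let ΛX ⊆ ∂_hY be the set of accumulation points of X in ∂_hY. For every ξ ∈ ∂_hY \ [ΛX] there exists a subset π_X(ξ) ⊆ X of diameter at most 2C such that for every sequence y_n ∈ Y converging to ξ one has π_X(y_n) ⊆ π_X(ξ) for all sufficiently large n. -/

import Mathlib

open Metric Filter Topology Set MeasureTheory Pointwise

noncomputable section

namespace ConfDyn

/-- `γ` is (the image of) a geodesic segment from `x` to `y`. -/
def IsGeodesicIn (Y : Type*) [MetricSpace Y] (γ : Set Y) (x y : Y) : Prop :=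
  ∃ f : ℝ → Y, f 0 = x ∧ f (dist x y) = y ∧
    (∀ s ∈ Set.Icc (0 : ℝ) (dist x y), ∀ t ∈ Set.Icc (0 : ℝ) (dist x y),
      dist (f s) (f t) = |s - t|) ∧
    γ = f '' Set.Icc (0 : ℝ) (dist x y)

/-- `Y` is a geodesic metric space. -/
def GeodesicSpace (Y : Type*) [MetricSpace Y] : Prop :=
  ∀ x y : Y, ∃ γ : Set Y, IsGeodesicIn Y γ x y

/-- the shortest projection of the point `y` to the subset `X`. -/
def projSet {Y : Type*} [MetricSpace Y] (X : Set Y) (y : Y) : Set Y :=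
  {x ∈ X | dist y x = Metric.infDist y X}

/-- the shortest projection of the subset `A` to the subset `X`. -/
def projSetOf {Y : Type*} [MetricSpace Y] (X A : Set Y) : Set Y :=
  ⋃ a ∈ A, projSet X a

/-- `d_X(x,y)`, the diameter of `π_X(x) ∪ π_X(y)`. -/
def projDist {Y : Type*} [MetricSpace Y] (X : Set Y) (x y : Y) : ENNReal :=
  EMetric.diam (projSet X x ∪ projSet X y)

/-- `X` is a `C`-contracting subset: any geodesic segment at distance at least `C`
from `X` has shortest projection to `X` of diameter at most `C`. -/
def IsContractingSet {Y : Type*} [MetricSpace Y] (C : ℝ) (X : Set Y) : Prop :=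
  ∀ x y : Y, ∀ γ : Set Y, IsGeodesicIn Y γ x y →
    (∀ p ∈ γ, C ≤ Metric.infDist p X) →
    EMetric.diam (projSetOf X γ) ≤ ENNReal.ofReal C

/-- the Busemann function based at `o` associated to `y`, `b_y(x) = d(x,y) - d(o,y)`. -/
def busemannCM {Y : Type*} [MetricSpace Y] (o y : Y) : C(Y, ℝ) :=
  ⟨fun x => dist x y - dist o y,
    (continuous_id.dist continuous_const).sub continuous_const⟩

/-- the horofunction compactification of `Y`: the closure of `{b_y : y ∈ Y}` in
`C(Y,ℝ)` with the compact-open topology. -/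
def horoCpt (Y : Type*) [MetricSpace Y] (o : Y) : Set C(Y, ℝ) :=
  closure (Set.range (busemannCM o))

/-- `ξ` is a point of the horofunction boundary `∂_h Y`. -/
def IsHoroPoint {Y : Type*} [MetricSpace Y] (o : Y) (ξ : C(Y, ℝ)) : Prop :=
  ξ ∈ horoCpt Y o ∧ ∀ y : Y, ξ ≠ busemannCM o y

/-- a sequence of points of `Y` converges to `ξ` in the horofunction compactification. -/
def HoroConv {Y : Type*} [MetricSpace Y] (o : Y) (u : ℕ → Y) (ξ : C(Y, ℝ)) : Prop :=
  Filter.Tendsto (fun n => busemannCM o (u n)) atTop (nhds ξ)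

/-- two horofunctions have (K-)finite difference for some K. -/
def FinDiff {Y : Type*} [MetricSpace Y] (ξ η : C(Y, ℝ)) : Prop :=
  ∃ K : ℝ, ∀ z : Y, |ξ z - η z| ≤ K

/-- the locus of a subset of the horofunction boundary. -/
def locus {Y : Type*} [MetricSpace Y] (o : Y) (Λ : Set C(Y, ℝ)) : Set C(Y, ℝ) :=
  {η | IsHoroPoint o η ∧ ∃ ξ ∈ Λ, FinDiff ξ η}

/-- the finite-difference relation as a setoid on `C(Y,ℝ)`. -/
def finDiffSetoid (Y : Type*) [MetricSpace Y] : Setoid C(Y, ℝ) where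
  r := FinDiff
  iseqv := ⟨fun ξ => ⟨0, fun z => by simp⟩,
    fun h => h.imp (fun K hK z => by rw [abs_sub_comm]; exact hK z),
    fun h₁ h₂ => by
      obtain ⟨K₁, hK₁⟩ := h₁
      obtain ⟨K₂, hK₂⟩ := h₂
      exact ⟨K₁ + K₂, fun z => (abs_sub_le _ _ _).trans (add_le_add (hK₁ z) (hK₂ z))⟩⟩

/-- the limit set of a subset `X ⊆ Y` in the horofunction boundary. -/
def limitSetOf {Y : Type*} [MetricSpace Y] (o : Y) (X : Set Y) : Set C(Y, ℝ) :=
  {ξ | IsHoroPoint o ξ ∧ ∃ u : ℕ → Y, (∀ n, u n ∈ X) ∧ HoroConv o u ξ}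

/-- accumulation points of a sequence of points of `Y` in the horofunction boundary. -/
def accPoints {Y : Type*} [MetricSpace Y] (o : Y) (u : ℕ → Y) : Set C(Y, ℝ) :=
  {ξ | IsHoroPoint o ξ ∧ ∃ φ : ℕ → ℕ, StrictMono φ ∧ HoroConv o (u ∘ φ) ξ}

/-- `X` is a quasi-geodesic: the image of a quasi-isometric embedding of a real interval. -/
def IsQuasiGeodesicSet {Y : Type*} [MetricSpace Y] (X : Set Y) : Prop :=
  ∃ (c : ℝ) (I : Set ℝ) (φ : ℝ → Y), 1 ≤ c ∧ I.OrdConnected ∧ X = φ '' I ∧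
    ∀ s ∈ I, ∀ t ∈ I,
      (1 / c) * |s - t| - c ≤ dist (φ s) (φ t) ∧ dist (φ s) (φ t) ≤ c * |s - t| + c

section GroupAction

variable {Y : Type*} [MetricSpace Y] {G : Type*} [Group G] [MulAction G Y]

/-- `G` acts by isometries on `Y`. -/
def IsometricAction (G Y : Type*) [Group G] [MulAction G Y] [MetricSpace Y] : Prop :=
  ∀ g : G, Isometry (fun y : Y => g • y)

/-- the action of `G` on `Y` is (metrically) proper. -/
def ProperAction (G Y : Type*) [Group G] [MulAction G Y] [MetricSpace Y] : Prop :=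
  ∀ B : Set Y, Bornology.IsBounded B → Set.Finite {g : G | (g • B) ∩ B ≠ ∅}

/-- `G` is non-elementary: no finite-index subgroup is trivial or infinite cyclic. -/
def NonElementary (G : Type*) [Group G] : Prop :=
  ∀ H : Subgroup G, H.index ≠ 0 → ∀ g : G, H ≠ Subgroup.zpowers g

/-- the orbit of `o` under the cyclic group generated by `f`. -/
def cyclicOrbit (o : Y) (f : G) : Set Y :=
  {y : Y | ∃ n : ℤ, y = f ^ n • o}

/-- `f` is a contracting element with `C`-contracting orbit: it has infinite order,
`n ↦ fⁿ • o` is a quasi-isometric embedding of `ℤ`, and `⟨f⟩ • o` is `C`-contracting. -/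
def IsContractingElt (o : Y) (C : ℝ) (f : G) : Prop :=
  (∀ n : ℤ, n ≠ 0 → f ^ n ≠ 1) ∧
  (∃ c : ℝ, 1 ≤ c ∧ ∀ m n : ℤ,
      (1 / c) * |(m : ℝ) - (n : ℝ)| - c ≤ dist (f ^ m • o) (f ^ n • o) ∧
      dist (f ^ m • o) (f ^ n • o) ≤ c * |(m : ℝ) - (n : ℝ)| + c) ∧
  IsContractingSet C (cyclicOrbit o f)

/-- `f` is a contracting element. -/
def IsContractingEltAny (o : Y) (f : G) : Prop :=
  ∃ C : ℝ, 1 ≤ C ∧ IsContractingElt o C f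

/-- the elementary group `E(f)`: elements moving `⟨f⟩ • o` a finite Hausdorff distance. -/
def EGroup (o : Y) (f : G) : Set G :=
  {g : G | EMetric.hausdorffEdist (g • cyclicOrbit o f) (cyclicOrbit o f) ≠ ⊤}

/-- the axis `Ax(f) = E(f) • o`. -/
def axisOf (o : Y) (f : G) : Set Y :=
  (fun g : G => g • o) '' EGroup o f

/-- the family of all `G`-translated axes of `h` and `k`. -/
def axesPairFam (o : Y) (h k : G) : Set (Set Y) :=
  {S | ∃ g : G, S = g • axisOf o h ∨ S = g • axisOf o k}

/-- `h` and `k` are independent contracting elements: the family of their translated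
axes has bounded projection. -/
def IndepElts (o : Y) (h k : G) : Prop :=
  ∃ B : ℝ, 0 < B ∧ ∀ U ∈ axesPairFam o h k, ∀ V ∈ axesPairFam o h k,
    U ≠ V → EMetric.diam (projSetOf U V) ≤ ENNReal.ofReal B

/-- the family of all `G`-translated axes of the triple `f₁, f₂, f₃`. -/
def axesTripleFam (o : Y) (f₁ f₂ f₃ : G) : Set (Set Y) :=
  {S | ∃ g : G, S = g • axisOf o f₁ ∨ S = g • axisOf o f₂ ∨ S = g • axisOf o f₃}

/-- `F = {f₁,f₂,f₃}` is an admissible triple with constants `C`, `B₀`: three pairwise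
independent contracting elements whose translated axes are `C`-contracting with
`B₀`-bounded projection. -/
def IsAdmissibleTriple (o : Y) (C B₀ : ℝ) (f₁ f₂ f₃ : G) : Prop :=
  f₁ ≠ f₂ ∧ f₁ ≠ f₃ ∧ f₂ ≠ f₃ ∧
  IsContractingEltAny o f₁ ∧ IsContractingEltAny o f₂ ∧ IsContractingEltAny o f₃ ∧
  IndepElts o f₁ f₂ ∧ IndepElts o f₁ f₃ ∧ IndepElts o f₂ f₃ ∧
  (∀ S ∈ axesTripleFam o f₁ f₂ f₃, IsContractingSet C S) ∧
  (∀ U ∈ axesTripleFam o f₁ f₂ f₃, ∀ V ∈ axesTripleFam o f₁ f₂ f₃,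
    U ≠ V → EMetric.diam (projSetOf U V) ≤ ENNReal.ofReal B₀)

/-- the geodesic `γ` contains an `(r,f)`-barrier at `g • o`. -/
def HasBarrier (o : Y) (r : ℝ) (f g : G) (γ : Set Y) : Prop :=
  Metric.infDist (g • o) γ ≤ r ∧ Metric.infDist ((g * f) • o) γ ≤ r

/-- the partial cone `Ω_x^F(g • o, r)`. -/
def partialCone (o x : Y) (f₁ f₂ f₃ : G) (g : G) (r : ℝ) : Set Y :=
  {z | ∃ γ : Set Y, IsGeodesicIn Y γ x z ∧
      (HasBarrier o r f₁ g γ ∨ HasBarrier o r f₂ g γ ∨ HasBarrier o r f₃ g γ)}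

/-- the partial shadow `Π_x^F(g • o, r)`: accumulation points of the partial cone in
the horofunction boundary. -/
def partialShadow (o x : Y) (f₁ f₂ f₃ : G) (g : G) (r : ℝ) : Set C(Y, ℝ) :=
  {ξ | IsHoroPoint o ξ ∧ ∃ u : ℕ → Y, (∀ n, u n ∈ partialCone o x f₁ f₂ f₃ g r) ∧
      HoroConv o u ξ}

/-- `ξ` is an `(r,F)`-conical point. -/
def IsConicalPt (o : Y) (f₁ f₂ f₃ : G) (r : ℝ) (ξ : C(Y, ℝ)) : Prop :=
  ∃ g₀ : G, Set.Infinite {g : G | ξ ∈ partialShadow o (g₀ • o) f₁ f₂ f₃ g r}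

/-- the usual cone `Ω_x(y,r)`. -/
def usualCone (x y : Y) (r : ℝ) : Set Y :=
  {z | ∃ γ : Set Y, IsGeodesicIn Y γ x z ∧ ∃ p ∈ γ, dist p y ≤ r}

/-- the usual shadow `Π_x(y,r)`. -/
def usualShadow (o x y : Y) (r : ℝ) : Set C(Y, ℝ) :=
  {ξ | IsHoroPoint o ξ ∧ ∃ u : ℕ → Y, (∀ n, u n ∈ usualCone x y r) ∧ HoroConv o u ξ}

/-- the set `Λ_c(G)` of conical points of the action. -/
def conicalSet (G : Type*) {Y : Type*} [Group G] [MulAction G Y] [MetricSpace Y]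
    (o : Y) : Set C(Y, ℝ) :=
  {ξ | ∃ r : ℝ, 0 < r ∧ ∃ g₀ : G, ∃ u : ℕ → G,
      Filter.Tendsto (fun n => dist o (u n • o)) atTop atTop ∧
      ∀ n, ξ ∈ usualShadow o (g₀ • o) (u n • o) r}

/-- the attracting fixed-point set `[h⁺]`: the locus of the accumulation points of
`{hⁿ o : n > 0}` in the horofunction boundary. -/
def attrFix (o : Y) (h : G) : Set C(Y, ℝ) :=
  locus o (accPoints o (fun n : ℕ => h ^ (n + 1) • o))

/-- the repelling fixed-point set `[h⁻]`. -/
def repFix (o : Y) (h : G) : Set C(Y, ℝ) :=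
  locus o (accPoints o (fun n : ℕ => h ^ (-(n + 1) : ℤ) • o))

/-- the limit set `Λ G y` of the orbit `G • y` in the horofunction boundary. -/
def orbitLimitSet (G : Type*) {Y : Type*} [Group G] [MulAction G Y] [MetricSpace Y]
    (o y : Y) : Set C(Y, ℝ) :=
  {ξ | IsHoroPoint o ξ ∧ ∃ u : ℕ → G,
      Filter.Tendsto (fun n => busemannCM o (u n • y)) atTop (nhds ξ)}

/-- the action of an isometry `g` on horofunctions. -/
def horoAct [ContinuousConstSMul G Y] (o : Y) (g : G) (ξ : C(Y, ℝ)) : C(Y, ℝ) :=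
  ⟨fun y => ξ (g⁻¹ • y) - ξ (g⁻¹ • o),
    (ξ.continuous.comp (continuous_const_smul g⁻¹)).sub continuous_const⟩

/-- the number of orbit points of `Γ ⊆ G` in the closed ball of radius `R` around `o`. -/
def orbitCount (G : Type*) {Y : Type*} [Group G] [MulAction G Y] [MetricSpace Y]
    (o : Y) (Γ : Set G) (R : ℝ) : ℕ :=
  Nat.card {g : G // g ∈ Γ ∧ dist o (g • o) ≤ R}

/-- the critical exponent `ω_Γ` of a subset `Γ ⊆ G`. -/
def critExp (G : Type*) {Y : Type*} [Group G] [MulAction G Y] [MetricSpace Y]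
    (o : Y) (Γ : Set G) : ℝ :=
  Filter.limsup (fun R : ℝ => Real.log (orbitCount G o Γ R) / R) atTop

/-- an `ω`-dimensional `G`-equivariant conformal density on the horofunction boundary:
a family of finite measures supported on `∂_h Y`, normalized at `o`, `G`-equivariant,
with conformal derivative `dμ_x/dμ_y(ξ) = e^{-ω·B_ξ(x,y)}`. -/
def IsConformalDensity (G : Type*) {Y : Type*} [Group G] [MulAction G Y] [MetricSpace Y]
    [ContinuousConstSMul G Y] [MeasurableSpace C(Y, ℝ)]
    (o : Y) (ω : ℝ) (μ : Y → MeasureTheory.Measure C(Y, ℝ)) : Prop :=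
  (∀ x : Y, MeasureTheory.IsFiniteMeasure (μ x)) ∧
  (∀ x : Y, μ x {ξ : C(Y, ℝ) | ¬ IsHoroPoint o ξ} = 0) ∧
  μ o Set.univ = 1 ∧
  (∀ g : G, ∀ x : Y, MeasureTheory.Measure.map (horoAct o g) (μ x) = μ (g • x)) ∧
  (∀ x y : Y, μ x = (μ y).withDensity
      (fun ξ : C(Y, ℝ) => ENNReal.ofReal (Real.exp (-ω * (ξ x - ξ y)))))

end GroupAction

/-!
Let `a ∈ π_X(z)` and `b ∈ π_X(z')` with `d(a, b) > C`. A geodesic `[z, z']` cannot stay `C`-far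
from `X`, since then contraction would give `d(a, b) ≤ C`; at its first point `p` with
`d(p, X) = C`, contraction applied to `[z, p]` puts `π_X(p)` within `C` of `a`, hence
`d(z, a) + d(a, z') ≤ d(z, z') + 4C`.

For `z_n → ξ` the projections `π_X(z_n)` stay bounded: otherwise projections escaping to infinity
accumulate at some `η ∈ Λ X`, and the inequality above gives `|b_η - b_ξ| ≤ 4C`, i.e.
`ξ ∈ [Λ X]`. With bounded projections, the inequality for points far along two sequences
converging to `ξ` contradicts their horofunctions being close on a large ball, so the
projections are eventually pairwise `C`-close. Then `π_X(ξ)` can be taken to be the set of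
points of `X` eventually `C`-close to the projections of one fixed sequence converging to `ξ`.
-/

section Geodesic

variable {Y : Type*} [MetricSpace Y]

lemma dist_eq_sub_of_isometryOn {f : ℝ → Y} {L s t : ℝ}
    (hf : ∀ s ∈ Icc (0 : ℝ) L, ∀ t ∈ Icc (0 : ℝ) L, dist (f s) (f t) = |s - t|)
    (hs : s ∈ Icc 0 L) (ht : t ∈ Icc 0 L) (hst : s ≤ t) : dist (f s) (f t) = t - s := by
  rw [hf s hs t ht, abs_of_nonpos (sub_nonpos.2 hst), neg_sub]

lemma isGeodesicIn_image_Icc {f : ℝ → Y} {L t : ℝ}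
    (hf : ∀ s ∈ Icc (0 : ℝ) L, ∀ t ∈ Icc (0 : ℝ) L, dist (f s) (f t) = |s - t|)
    (ht : t ∈ Icc 0 L) : IsGeodesicIn Y (f '' Icc 0 t) (f 0) (f t) := by
  have hd : dist (f 0) (f t) = t := by
    simpa using dist_eq_sub_of_isometryOn hf ⟨le_rfl, ht.1.trans ht.2⟩ ht ht.1
  refine ⟨f, rfl, by rw [hd], fun s hs r hr => hf s ?_ r ?_, by rw [hd]⟩
  · exact ⟨hs.1, (hs.2.trans_eq hd).trans ht.2⟩
  · exact ⟨hr.1, (hr.2.trans_eq hd).trans ht.2⟩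

lemma IsGeodesicIn.left_mem {γ : Set Y} {x y : Y} (h : IsGeodesicIn Y γ x y) : x ∈ γ := by
  obtain ⟨f, hf0, -, -, rfl⟩ := h
  exact ⟨0, ⟨le_rfl, dist_nonneg⟩, hf0⟩

lemma IsGeodesicIn.right_mem {γ : Set Y} {x y : Y} (h : IsGeodesicIn Y γ x y) : y ∈ γ := by
  obtain ⟨f, -, hfL, -, rfl⟩ := h
  exact ⟨dist x y, ⟨dist_nonneg, le_rfl⟩, hfL⟩

lemma GeodesicSpace.exists_dist_eq (hY : GeodesicSpace Y) (x y : Y) {t : ℝ} (ht₀ : 0 ≤ t)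
    (ht : t ≤ dist x y) : ∃ p, dist x p = t ∧ dist p y = dist x y - t := by
  obtain ⟨-, f, hf0, hfL, hf, -⟩ := hY x y
  have hmem : ∀ {s}, 0 ≤ s → s ≤ dist x y → s ∈ Icc (0 : ℝ) (dist x y) := fun h₀ h₁ => ⟨h₀, h₁⟩
  refine ⟨f t, ?_, ?_⟩
  · rw [← hf0, dist_eq_sub_of_isometryOn hf (hmem le_rfl dist_nonneg) (hmem ht₀ ht) ht₀, sub_zero]
  · conv_lhs => rw [← hfL]
    exact dist_eq_sub_of_isometryOn hf (hmem ht₀ ht) (hmem dist_nonneg le_rfl) ht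

end Geodesic

lemma exists_eq_forall_le_of_continuousOn {g : ℝ → ℝ} {L c t₁ : ℝ}
    (hg : ContinuousOn g (Icc 0 L)) (h₀ : c ≤ g 0) (ht₁ : t₁ ∈ Icc 0 L) (h₁ : g t₁ ≤ c) :
    ∃ t₀ ∈ Icc 0 L, g t₀ = c ∧ ∀ t ∈ Icc 0 t₀, c ≤ g t := by
  set A := Icc 0 L ∩ g ⁻¹' Iic c
  have hA : IsClosed A := hg.preimage_isClosed_of_isClosed isClosed_Icc isClosed_Iic
  have hbdd : BddBelow A := ⟨0, fun t ht => ht.1.1⟩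
  have ht₀ : sInf A ∈ A := hA.csInf_mem ⟨t₁, ht₁, h₁⟩ hbdd
  have hmin : ∀ t ∈ Icc 0 (sInf A), g t ≤ c → t = sInf A := fun t ht hgt =>
    le_antisymm ht.2 (csInf_le hbdd ⟨⟨ht.1, ht.2.trans ht₀.1.2⟩, hgt⟩)
  obtain ⟨s, hs, hgs⟩ := intermediate_value_Icc' ht₀.1.1
    (hg.mono (Icc_subset_Icc le_rfl ht₀.1.2)) ⟨ht₀.2, h₀⟩
  have hgt₀ : g (sInf A) = c := hmin s hs hgs.le ▸ hgs
  refine ⟨sInf A, ht₀.1, hgt₀, fun t ht => le_of_not_gt fun hlt => ?_⟩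
  rw [hmin t ht hlt.le, hgt₀] at hlt
  exact hlt.false

section Contracting

variable {Y : Type*} [MetricSpace Y] {X : Set Y} {C : ℝ}

lemma projSet_nonempty [ProperSpace Y] (hX : IsClosed X) (hne : X.Nonempty) (y : Y) :
    (projSet X y).Nonempty := by
  obtain ⟨a, haX, hd⟩ := hX.exists_infDist_eq_dist hne y
  exact ⟨a, haX, hd.symm⟩

lemma IsContractingSet.dist_le_of_isGeodesicIn (hXcon : IsContractingSet C X) (hC : 0 ≤ C)
    {γ : Set Y} {x y a b : Y} (hγ : IsGeodesicIn Y γ x y)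
    (hfar : ∀ p ∈ γ, C ≤ infDist p X) (ha : a ∈ projSet X x) (hb : b ∈ projSet X y) :
    dist a b ≤ C := by
  have h := (edist_le_ediam_of_mem (mem_biUnion hγ.left_mem ha)
    (mem_biUnion hγ.right_mem hb)).trans (hXcon x y γ hγ hfar)
  rwa [edist_dist, ENNReal.ofReal_le_ofReal_iff hC] at h

lemma IsContractingSet.dist_add_dist_le [ProperSpace Y] (hXcon : IsContractingSet C X)
    (hY : GeodesicSpace Y) (hX : IsClosed X) (hC : 0 ≤ C) {z z' a b : Y}
    (ha : a ∈ projSet X z) (hb : b ∈ projSet X z') (hab : C < dist a b) :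
    dist z a + dist a z' ≤ dist z z' + 4 * C := by
  obtain ⟨γ, f, hf0, hfL, hf, hγ⟩ := hY z z'
  subst hf0
  set L := dist (f 0) z'
  by_cases hz : infDist (f 0) X ≤ C
  · have : dist (f 0) a ≤ C := ha.2 ▸ hz
    linarith [dist_triangle a (f 0) z', dist_comm a (f 0)]
  have hg : ContinuousOn (fun t => infDist (f t) X) (Icc 0 L) :=
    (continuous_infDist_pt X).comp_continuousOn
      (LipschitzOnWith.of_dist_le_mul (K := 1) fun s hs t ht => by
        rw [hf s hs t ht, NNReal.coe_one, one_mul, Real.dist_eq]).continuousOn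
  obtain ⟨t₁, ht₁, h₁⟩ : ∃ t ∈ Icc 0 L, infDist (f t) X ≤ C := by
    by_contra! hfar
    refine hab.not_ge (hXcon.dist_le_of_isGeodesicIn hC ⟨f, rfl, hfL, hf, hγ⟩ ?_ ha hb)
    rw [hγ]
    rintro _ ⟨t, ht, rfl⟩
    exact (hfar t ht).le
  obtain ⟨t₀, ht₀, hgt₀, hfar⟩ :=
    exists_eq_forall_le_of_continuousOn hg (not_le.1 hz).le ht₁ h₁
  obtain ⟨r, hr⟩ := projSet_nonempty hX ⟨a, ha.1⟩ (f t₀)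
  have har : dist a r ≤ C := by
    refine hXcon.dist_le_of_isGeodesicIn hC (isGeodesicIn_image_Icc hf ht₀) ?_ ha hr
    rintro _ ⟨t, ht, rfl⟩
    exact hfar t ht
  have hpr : dist (f t₀) r = C := hr.2.trans hgt₀
  have hzp : dist (f 0) (f t₀) = t₀ := by
    simpa using dist_eq_sub_of_isometryOn hf ⟨le_rfl, ht₀.1.trans ht₀.2⟩ ht₀ ht₀.1
  have hpz' : dist (f t₀) z' = L - t₀ := by
    rw [← hfL]
    exact dist_eq_sub_of_isometryOn hf ht₀ ⟨ht₀.1.trans ht₀.2, le_rfl⟩ ht₀.2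
  linarith [dist_triangle (f 0) (f t₀) a, dist_triangle (f t₀) r a, dist_comm r a,
    dist_triangle a (f t₀) z', dist_triangle a r (f t₀), dist_comm r (f t₀)]

end Contracting

section Horofunction

variable {Y : Type*} [MetricSpace Y] {o : Y}

@[simp]
lemma busemannCM_apply (o y x : Y) : busemannCM o y x = dist x y - dist o y := rfl

lemma lipschitzWith_busemannCM (o y : Y) : LipschitzWith 1 (busemannCM o y) :=
  LipschitzWith.of_dist_le_mul fun p q => by
    simpa [Real.dist_eq] using abs_dist_sub_le p q y

lemma continuous_busemannCM (o : Y) : Continuous (busemannCM o) :=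
  ContinuousMap.continuous_of_continuous_uncurry _ <|
    (continuous_snd.dist continuous_fst).sub (continuous_const.dist continuous_fst)

lemma isCompact_setOf_lipschitzWith_one (o : Y) :
    IsCompact {f : C(Y, ℝ) | LipschitzWith 1 f ∧ f o = 0} := by
  refine ArzelaAscoli.isCompact_of_equicontinuous _ ?_
    (LipschitzWith.uniformEquicontinuous _ 1 fun f => f.2.1).equicontinuous
  have himage : ContinuousMap.toFun '' {f : C(Y, ℝ) | LipschitzWith 1 f ∧ f o = 0} =
      {g : Y → ℝ | LipschitzWith 1 g ∧ g o = 0} := by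
    ext g
    constructor
    · rintro ⟨f, hf, rfl⟩
      exact hf
    · exact fun hg => ⟨⟨g, hg.1.continuous⟩, hg, rfl⟩
  rw [himage]
  refine (isCompact_univ_pi fun y => isCompact_closedBall (0 : ℝ) (dist y o)).of_isClosed_subset
    ((isClosed_setOfPred_lipschitzWith 1).inter (isClosed_eq (continuous_apply o)
      continuous_const)) fun g hg y _ => ?_
  simpa [hg.2] using hg.1.dist_le_mul y o

lemma exists_busemannCM_eq_neg (hY : GeodesicSpace Y) {z : Y} {T : ℝ} (hT₀ : 0 ≤ T)
    (hT : T ≤ dist o z) : ∃ g ∈ closedBall o T, busemannCM o z g = -T := by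
  obtain ⟨g, hog, hgz⟩ := hY.exists_dist_eq o z hT₀ hT
  exact ⟨g, by rw [mem_closedBall, dist_comm, hog], by rw [busemannCM_apply, hgz]; ring⟩

lemma HoroConv.tendsto_apply {z : ℕ → Y} {ξ : C(Y, ℝ)} (hz : HoroConv o z ξ) (w : Y) :
    Tendsto (fun n => busemannCM o (z n) w) atTop (𝓝 (ξ w)) :=
  ((continuous_eval_const w).tendsto ξ).comp hz

variable [ProperSpace Y]

lemma exists_subseq_horoConv (o : Y) (u : ℕ → Y) :
    ∃ η φ, StrictMono φ ∧ HoroConv o (u ∘ φ) η := by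
  obtain ⟨η, -, φ, hφ, hη⟩ := (isCompact_setOf_lipschitzWith_one o).tendsto_subseq
    (x := fun n => busemannCM o (u n)) fun n => ⟨lipschitzWith_busemannCM o (u n), by simp⟩
  exact ⟨η, φ, hφ, hη⟩

namespace HoroConv

variable {z : ℕ → Y} {ξ : C(Y, ℝ)}

lemma eventually_forall_closedBall (hz : HoroConv o z ξ) (T : ℝ) {ε : ℝ} (hε : 0 < ε) :
    ∀ᶠ n in atTop, ∀ x ∈ closedBall o T, dist (ξ x) (busemannCM o (z n) x) < ε :=
  Metric.tendstoUniformlyOn_iff.1 (ContinuousMap.tendsto_iff_forall_isCompact_tendstoUniformlyOn.1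
    hz _ (isCompact_closedBall o T)) ε hε

lemma tendsto_dist_atTop (hz : HoroConv o z ξ) (hξ : IsHoroPoint o ξ) :
    Tendsto (fun n => dist o (z n)) atTop atTop := by
  refine tendsto_atTop.2 fun T => ?_
  by_contra hfreq
  rw [not_eventually] at hfreq
  obtain ⟨y, -, φ, hφ, hy⟩ := (isCompact_closedBall o T).tendsto_subseq'
    (hfreq.mono fun n hn => mem_closedBall'.2 (not_le.1 hn).le)
  exact hξ.2 y (tendsto_nhds_unique (hz.comp hφ.tendsto_atTop)
    ((continuous_busemannCM o).tendsto y |>.comp hy))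

end HoroConv

lemma isHoroPoint_of_tendsto_dist (hY : GeodesicSpace Y) {u : ℕ → Y} {η : C(Y, ℝ)}
    (hd : Tendsto (fun n => dist o (u n)) atTop atTop) (hu : HoroConv o u η) :
    IsHoroPoint o η := by
  refine ⟨mem_closure_of_tendsto hu (Eventually.of_forall fun n => mem_range_self _),
    fun y hy => ?_⟩
  subst hy
  obtain ⟨n, hclose, hn⟩ := ((hu.eventually_forall_closedBall (dist o y + 2) one_pos).and
    (hd.eventually_ge_atTop (dist o y + 2))).exists
  obtain ⟨g, hg, hgT⟩ := exists_busemannCM_eq_neg hY (by positivity) hn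
  have h := hclose g hg
  rw [hgT, Real.dist_eq, busemannCM_apply] at h
  linarith [(abs_lt.1 h).2, dist_nonneg (x := g) (y := y)]

end Horofunction

section BoundaryProjection

variable {Y : Type*} [MetricSpace Y] [ProperSpace Y] {o : Y} {X : Set Y} {C : ℝ}
  {ξ : C(Y, ℝ)}

lemma abs_busemannCM_sub_le (hY : GeodesicSpace Y) (hX : IsClosed X)
    (hXcon : IsContractingSet C X) (hC : 0 ≤ C) {z w a b c : Y} (ha : a ∈ projSet X z)
    (hb : b ∈ projSet X w) (hc : c ∈ projSet X o) (hab : C < dist a b) (hac : C < dist a c) :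
    |busemannCM o a w - busemannCM o z w| ≤ 4 * C := by
  have hw := hXcon.dist_add_dist_le hY hX hC ha hb hab
  have ho := hXcon.dist_add_dist_le hY hX hC ha hc hac
  rw [busemannCM_apply, busemannCM_apply, abs_le]
  constructor <;>
    linarith [dist_triangle z a w, dist_triangle z a o, dist_comm w a, dist_comm o a,
      dist_comm w z, dist_comm o z]

lemma eventually_projSet_bounded (hY : GeodesicSpace Y) (hX : IsClosed X)
    (hXcon : IsContractingSet C X) (hC : 0 ≤ C) (hξ : IsHoroPoint o ξ)
    (hξX : ξ ∉ locus o (limitSetOf o X)) {z : ℕ → Y} (hz : HoroConv o z ξ) :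
    ∃ R, ∀ᶠ n in atTop, ∀ a ∈ projSet X (z n), dist o a ≤ R := by
  by_contra! hunbdd
  have hfar (k : ℕ) : ∃ n ≥ k, ∃ a ∈ projSet X (z n), (k : ℝ) < dist o a :=
    frequently_atTop.1 (hunbdd k) k
  choose n hn a ha hak using hfar
  obtain ⟨η, φ, hφ, hη⟩ := exists_subseq_horoConv o a
  have hesc : Tendsto (fun k => dist o (a (φ k))) atTop atTop :=
    tendsto_atTop_mono (fun k => (Nat.cast_le.2 (hφ.id_le k)).trans (hak (φ k)).le)
      tendsto_natCast_atTop_atTop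
  have hzφ : HoroConv o (z ∘ n ∘ φ) ξ :=
    hz.comp (tendsto_atTop_mono (fun k => (hφ.id_le k).trans (hn (φ k))) tendsto_id)
  have hne : X.Nonempty := ⟨a 0, (ha 0).1⟩
  obtain ⟨c, hc⟩ := projSet_nonempty hX hne o
  refine hξX ⟨hξ, η, ⟨isHoroPoint_of_tendsto_dist hY hesc hη, a ∘ φ, fun k => (ha _).1, hη⟩,
    4 * C, fun w => ?_⟩
  obtain ⟨b, hb⟩ := projSet_nonempty hX hne w
  refine le_of_tendsto ((hη.tendsto_apply w).sub (hzφ.tendsto_apply w)).abs ?_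
  filter_upwards [hesc.eventually_gt_atTop (dist o b + C),
    hesc.eventually_gt_atTop (dist o c + C)] with k hkb hkc
  refine abs_busemannCM_sub_le hY hX hXcon hC (ha (φ k)) hb hc ?_ ?_ <;> dsimp only [Function.comp_apply]
  · linarith [dist_triangle o b (a (φ k)), dist_comm b (a (φ k))]
  · linarith [dist_triangle o c (a (φ k)), dist_comm c (a (φ k))]

lemma eventually_dist_projSet_le (hY : GeodesicSpace Y) (hX : IsClosed X)
    (hXcon : IsContractingSet C X) (hC : 0 ≤ C) (hξ : IsHoroPoint o ξ)
    (hξX : ξ ∉ locus o (limitSetOf o X)) {z z' : ℕ → Y} (hz : HoroConv o z ξ)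
    (hz' : HoroConv o z' ξ) :
    ∀ᶠ p in atTop ×ˢ atTop, ∀ a ∈ projSet X (z p.1), ∀ b ∈ projSet X (z' p.2),
      dist a b ≤ C := by
  obtain ⟨R, hR⟩ := eventually_projSet_bounded hY hX hXcon hC hξ hξX hz
  set T := |R| + 2 * C + 1
  have hT₀ : 0 ≤ T := by positivity
  filter_upwards [((hR.and ((hz.tendsto_dist_atTop hξ).eventually_ge_atTop T)).and
    (hz.eventually_forall_closedBall T one_pos)).prod_mk
    (hz'.eventually_forall_closedBall T one_pos)]
    with ⟨m, n⟩ ⟨⟨⟨hRm, hTm⟩, hξm⟩, hξn⟩ a ha b hb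
  by_contra! hab
  have hsum := hXcon.dist_add_dist_le hY hX hC ha hb hab
  -- `b_{z m} g = -T`, while `hsum` forces `b_{z' n} g ≥ T - 4C - 2R`; both are `1`-close to `ξ g`.
  obtain ⟨g, hg, hgT⟩ := exists_busemannCM_eq_neg hY hT₀ hTm
  have h₁ := hξm g hg
  have h₂ := hξn g hg
  rw [hgT, Real.dist_eq] at h₁
  rw [Real.dist_eq, busemannCM_apply] at h₂
  rw [busemannCM_apply] at hgT
  linarith [(abs_lt.1 h₁).2, (abs_lt.1 h₂).1, hRm a ha, le_abs_self R,
    dist_triangle (z m) g (z' n), dist_triangle o a (z' n), dist_triangle o a (z m),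
    dist_comm a (z m), dist_comm (z m) g]

theorem exists_eventually_projSet_subset (hY : GeodesicSpace Y) (hX : IsClosed X)
    (hXcon : IsContractingSet C X) (hC : 0 ≤ C) (hξ : IsHoroPoint o ξ)
    (hξX : ξ ∉ locus o (limitSetOf o X)) (hne : X.Nonempty) {y₀ : ℕ → Y}
    (hy₀ : HoroConv o y₀ ξ) :
    ∃ P ⊆ X, EMetric.diam P ≤ ENNReal.ofReal (2 * C) ∧
      ∀ y : ℕ → Y, HoroConv o y ξ → ∀ᶠ n in atTop, projSet X (y n) ⊆ P := by
  refine ⟨{x ∈ X | ∀ᶠ k in atTop, ∀ w ∈ projSet X (y₀ k), dist x w ≤ C}, fun x hx => hx.1,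
    ediam_le fun p hp q hq => ?_, fun y hy => ?_⟩
  · obtain ⟨k, hpk, hqk⟩ := (hp.2.and hq.2).exists
    obtain ⟨w, hw⟩ := projSet_nonempty hX hne (y₀ k)
    rw [edist_dist]
    exact ENNReal.ofReal_le_ofReal (by linarith [dist_triangle_right p q w, hpk w hw, hqk w hw])
  · filter_upwards [(eventually_dist_projSet_le hY hX hXcon hC hξ hξX hy hy₀).curry]
      with n hn x hx
    exact ⟨hx.1, hn.mono fun k hk w hw => hk x hx w hw⟩

end BoundaryProjection

theorem statement10_general {Y : Type*} [MetricSpace Y] [ProperSpace Y]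
    (hY : GeodesicSpace Y) (o : Y) (C : ℝ) (hC : 1 ≤ C)
    (X : Set Y) (hXcl : IsClosed X)
    (hXcon : IsContractingSet C X)
    (ξ : C(Y, ℝ)) (hξ : IsHoroPoint o ξ) (hξn : ξ ∉ locus o (limitSetOf o X)) :
    ∃ P : Set Y, P ⊆ X ∧ EMetric.diam P ≤ ENNReal.ofReal (2 * C) ∧
      ∀ y : ℕ → Y, HoroConv o y ξ → ∀ᶠ n in atTop, projSet X (y n) ⊆ P := by
  have hC₀ : 0 ≤ C := zero_le_one.trans hC
  rcases X.eq_empty_or_nonempty with rfl | hne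
  · exact ⟨∅, subset_rfl, by simp [EMetric.diam], fun y _ => .of_forall fun n x hx => hx.1⟩
  by_cases hconv : ∃ y₀, HoroConv o y₀ ξ
  · obtain ⟨y₀, hy₀⟩ := hconv
    exact exists_eventually_projSet_subset hY hXcl hXcon hC₀ hξ hξn hne hy₀
  · exact ⟨∅, empty_subset X, by simp [EMetric.diam], fun y hy => absurd ⟨y, hy⟩ hconv⟩

/-- boundary projection to a `C`-contracting quasi-geodesic: for every
`ξ ∈ ∂_h Y` outside the locus of `Λ X` there is a subset `P ⊆ X` of diameter at most
`2C` containing the projections of every sequence converging to `ξ`, eventually. -/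
theorem statement10 {Y : Type*} [MetricSpace Y] [ProperSpace Y]
    (hY : GeodesicSpace Y) (o : Y) (C : ℝ) (hC : 1 ≤ C)
    (X : Set Y) (hXcl : IsClosed X) (hXq : IsQuasiGeodesicSet X)
    (hXcon : IsContractingSet C X)
    (ξ : C(Y, ℝ)) (hξ : IsHoroPoint o ξ) (hξn : ξ ∉ locus o (limitSetOf o X)) :
    ∃ P : Set Y, P ⊆ X ∧ EMetric.diam P ≤ ENNReal.ofReal (2 * C) ∧
      ∀ y : ℕ → Y, HoroConv o y ξ → ∀ᶠ n in atTop, projSet X (y n) ⊆ P :=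
  statement10_general hY o C hC X hXcl hXcon ξ hξ hξn

end ConfDyn
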